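/- (Time-reversal identity, coefficient form) Let X : [a,b] → ℝ^d be a continuously differentiable path and let ←X : [a,b] → ℝ^d be its time-reversal, ←X_t = X_{a+b−t}. Then for every k ≥ 1 and every word (i₁,…,i_k) with letters in {1,…,d}: Σ_{j=0}^{k} S(X)^{i₁,…,i_j}_{a,b} · S(←X)^{i_{j+1},…,i_k}_{a,b} = 0, where the terms with j = 0 and j = k involve the empty-word convention S^∅ = 1. (This expresses that the signature of ←X is the inverse of the signature of X under the tensor product.) -/

import Mathlib

/-!
Substituting `t ↦ a + b - t` turns `S(←X)^v` into `(-1)^|v|` times the integral of the same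
integrand over the decreasing simplex. By Fubini, the `j`-th term of the sum is then `(-1)^(k-j)`
times the integral of `∏ (X^{wᵢ})'(uᵢ)` over the points `u ∈ (a,b)^k` that increase on the first
`j` coordinates and decrease on the others. Almost every `u` is injective; if `m` is the position
of its maximum, such a `u` can only lie in the `j`-th of these sets for `j = m` and `j = m + 1`,
and it lies in both or in neither, so the signed indicators cancel pointwise.
-/

open MeasureTheory

/-- The `k`-fold iterated integral (signature coefficient) of a path
`X : ℝ → (Fin d → ℝ)` over `[a,b]` along the word `w`, defined as the Lebesgue
integral of `∏ i, (X^{w i})'(t i)` over the simplex `a < t₁ < ⋯ < t_k < b`.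
For the empty word (`k = 0`) this equals `1` by convention. -/
noncomputable def sigTerm {d : ℕ} (X : ℝ → Fin d → ℝ) (a b : ℝ) {k : ℕ}
    (w : Fin k → Fin d) : ℝ :=
  ∫ t in {t : Fin k → ℝ | StrictMono t ∧ ∀ i, t i ∈ Set.Ioo a b},
    ∏ i, deriv (fun s => X s (w i)) (t i)

open Set Function

namespace Signature

section UpDown

variable {α : Type*} [LinearOrder α] {k : ℕ}

def upDownSet (k j : ℕ) : Set (Fin k → α) :=
  {u | StrictMonoOn u {p | (p : ℕ) < j} ∧ StrictAntiOn u {p | j ≤ (p : ℕ)}}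

lemma mem_upDownSet_iff_mem_succ_of_forall_le {u : Fin k → α} (hu : Injective u) {m : Fin k}
    (hm : ∀ p, u p ≤ u m) : u ∈ upDownSet k m ↔ u ∈ upDownSet k ((m : ℕ) + 1) := by
  have hlt : ∀ p, p ≠ m → u p < u m := fun p hp => (hm p).lt_of_ne (hu.ne hp)
  constructor
  · rintro ⟨hinc, hdec⟩
    refine ⟨fun p hp q hq hpq => ?_, hdec.mono fun p (hp : m + 1 ≤ p.1) => by grind⟩
    by_cases hqm : q = m
    · exact hqm ▸ hlt p (by grind)
    · exact hinc (by grind) (show q.1 < m by grind) hpq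
  · rintro ⟨hinc, hdec⟩
    refine ⟨hinc.mono fun p (hp : p.1 < m) => by grind, fun p hp q hq hpq => ?_⟩
    by_cases hpm : p = m
    · exact hpm ▸ hlt q (by grind)
    · exact hdec (show m + 1 ≤ p.1 by grind) (by grind) hpq

lemma eq_or_eq_succ_of_mem_upDownSet {u : Fin k → α} {m : Fin k} (hm : ∀ p, u p ≤ u m)
    {j : ℕ} (hj : j ≤ k) (hu : u ∈ upDownSet k j) : j = m ∨ j = m + 1 := by
  by_contra! hjm
  rcases Nat.lt_or_gt_of_ne hjm.1 with hjm | hjm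
  · have : u m < u ⟨m - 1, by omega⟩ :=
      hu.2 (show j ≤ m - 1 by omega) (show j ≤ m.1 by omega) (Fin.mk_lt_mk.2 (by omega) : _)
    exact (hm _).not_gt this
  · have : u m < u ⟨m + 1, by omega⟩ :=
      hu.1 (show m.1 < j by omega) (show m + 1 < j by omega) (Fin.mk_lt_mk.2 (by omega) : _)
    exact (hm _).not_gt this

lemma sum_neg_one_pow_mul_indicator_upDownSet (hk : 1 ≤ k) {u : Fin k → α} (hu : Injective u)
    (g : (Fin k → α) → ℝ) :
    ∑ j : Fin (k + 1), (-1 : ℝ) ^ (k - j) * (upDownSet k j).indicator g u = 0 := by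
  have : Nonempty (Fin k) := Fin.pos_iff_nonempty.mp hk
  obtain ⟨m, hm⟩ := Finite.exists_max u
  rw [Fintype.sum_eq_add (⟨m, by omega⟩ : Fin (k + 1)) ⟨m + 1, by omega⟩ (by simp [Fin.ext_iff])
    fun j hj => ?_]
  · have hsign : (-1 : ℝ) ^ (k - m) = -(-1) ^ (k - (m + 1)) := by
      rw [show k - m = k - (m + 1) + 1 by omega, pow_succ, mul_neg_one]
    have hpeak : (upDownSet k ((m : ℕ) + 1)).indicator g u = (upDownSet k m).indicator g u :=
      indicator_eq_indicator (mem_upDownSet_iff_mem_succ_of_forall_le hu hm).symm rfl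
    simp only [hpeak, hsign]
    ring
  · have hj' : u ∉ upDownSet k j := fun h => by
      rcases eq_or_eq_succ_of_mem_upDownSet hm (by omega) h with h' | h' <;>
        simp_all [Fin.ext_iff]
    rw [indicator_of_notMem hj', mul_zero]

end UpDown

lemma measurableSet_upDownSet (k j : ℕ) : MeasurableSet (upDownSet k j : Set (Fin k → ℝ)) := by
  simp only [upDownSet, StrictMonoOn, StrictAntiOn]
  measurability

lemma ae_injective (ι : Type*) [Fintype ι] : ∀ᵐ u : ι → ℝ, Injective u := by
  classical
  have hdiag : ∀ p q : ι, p ≠ q → volume {u : ι → ℝ | u p = u q} = 0 := by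
    intro p q hpq
    have hker : {u : ι → ℝ | u p = u q} =
        LinearMap.ker (LinearMap.proj (R := ℝ) (φ := fun _ : ι => ℝ) p - LinearMap.proj q) := by
      ext u
      simp [sub_eq_zero]
    rw [hker]
    refine Measure.addHaar_submodule _ _ fun htop => ?_
    have := LinearMap.congr_fun (LinearMap.ker_eq_top.1 htop) (Pi.single p 1)
    simp [Pi.single_eq_of_ne hpq.symm] at this
  have hsub : {u : ι → ℝ | ¬Injective u} ⊆ ⋃ (p) (q) (_ : p ≠ q), {u : ι → ℝ | u p = u q} := by
    intro u hu
    simp only [Injective, not_forall] at hu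
    obtain ⟨p, q, hpq, hne⟩ := hu
    exact mem_iUnion₂.2 ⟨p, q, mem_iUnion.2 ⟨hne, hpq⟩⟩
  exact measure_mono_null hsub (measure_iUnion_null fun p =>
    measure_iUnion_null fun q => measure_iUnion_null fun hpq => hdiag p q hpq)

lemma sum_neg_one_pow_mul_setIntegral_upDownSet {k : ℕ} (hk : 1 ≤ k) {μ : Measure (Fin k → ℝ)}
    (hμ : ∀ᵐ u ∂μ, Injective u) {F : (Fin k → ℝ) → ℝ} (hF : Integrable F μ) :
    ∑ j : Fin (k + 1), (-1 : ℝ) ^ (k - j) * ∫ u in upDownSet k j, F u ∂μ = 0 := by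
  simp_rw [← integral_indicator (measurableSet_upDownSet k _), ← integral_const_mul]
  rw [← integral_finsetSum]
  · exact integral_eq_zero_of_ae
      (hμ.mono fun u hu => sum_neg_one_pow_mul_indicator_upDownSet hk hu F)
  · exact fun j _ => (hF.indicator (measurableSet_upDownSet k j)).const_mul _

def cube (a b : ℝ) (n : ℕ) : Set (Fin n → ℝ) := {t | ∀ i, t i ∈ Ioo a b}

lemma integrableOn_cube_prod (a b : ℝ) {n : ℕ} {f : Fin n → ℝ → ℝ}
    (hf : ∀ i, Continuous (f i)) : IntegrableOn (fun u => ∏ i, f i (u i)) (cube a b n) :=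
  (ContinuousOn.integrableOn_compact (isCompact_univ_pi fun _ => isCompact_Icc)
    (continuous_finsetProd _ fun i _ => (hf i).comp (continuous_apply i)).continuousOn).mono_set
    fun _ hu i _ => Ioo_subset_Icc_self (hu i)

lemma setIntegral_strictMono_cube_comp_reflect (a b : ℝ) {n : ℕ} (F : (Fin n → ℝ) → ℝ) :
    ∫ t in {t | StrictMono t} ∩ cube a b n, F (fun i => a + b - t i) =
      ∫ t in {t | StrictAnti t} ∩ cube a b n, F t := by
  have hpre : (fun t : Fin n → ℝ => (fun _ => a + b) - t) ⁻¹' ({t | StrictAnti t} ∩ cube a b n) =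
      {t | StrictMono t} ∩ cube a b n := by
    ext t
    simp only [mem_preimage, mem_inter_iff, mem_ofPred_eq, cube, Pi.sub_apply, mem_Ioo]
    refine and_congr ⟨fun h p q hpq => ?_, fun h p q hpq => ?_⟩ (forall_congr' fun i => ?_)
    · simpa using h hpq
    · simpa using h hpq
    · constructor <;> rintro ⟨h₁, h₂⟩ <;> constructor <;> linarith
  have := (Measure.measurePreserving_sub_left volume _).setIntegral_preimage_emb
    (MeasurableEquiv.subLeft (fun _ => a + b)).measurableEmbedding F
    ({t | StrictAnti t} ∩ cube a b n)
  rwa [hpre] at this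

lemma sigTerm_comp_reflect {d : ℕ} (X : ℝ → Fin d → ℝ) (a b : ℝ) {m : ℕ} (v : Fin m → Fin d) :
    sigTerm (fun t => X (a + b - t)) a b v = (-1) ^ m *
      ∫ t in {t | StrictAnti t} ∩ cube a b m, ∏ i, deriv (fun s => X s (v i)) (t i) := by
  rw [← setIntegral_strictMono_cube_comp_reflect, ← integral_const_mul]
  have hder : ∀ c τ, deriv (fun s => X (a + b - s) c) τ = -deriv (fun s => X s c) (a + b - τ) :=
    fun c τ => deriv_comp_const_sub (fun s => X s c) (a + b) τ
  simp only [sigTerm, hder, Finset.prod_neg, Finset.card_univ, Fintype.card_fin]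
  rfl

lemma setIntegral_mul_comp_sumPiEquiv {ι κ η : Type*} [Fintype ι] [Fintype κ] [Fintype η]
    (e : ι ⊕ κ ≃ η) (A : Set (ι → ℝ)) (B : Set (κ → ℝ)) (g : (ι → ℝ) → ℝ) (h : (κ → ℝ) → ℝ) :
    ∫ u in {u : η → ℝ | (fun i => u (e (.inl i))) ∈ A ∧ (fun i => u (e (.inr i))) ∈ B},
        g (fun i => u (e (.inl i))) * h (fun i => u (e (.inr i))) =
      (∫ x in A, g x) * ∫ y in B, h y := by
  let Φ : (η → ℝ) ≃ᵐ (ι → ℝ) × (κ → ℝ) :=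
    (MeasurableEquiv.piCongrLeft (fun _ => ℝ) e).symm.trans
      (MeasurableEquiv.sumPiEquivProdPi fun _ => ℝ)
  have hΦ : MeasurePreserving Φ volume volume :=
    (volume_measurePreserving_sumPiEquivProdPi _).comp
      ((volume_measurePreserving_piCongrLeft (fun _ => ℝ) e).symm _)
  have := hΦ.setIntegral_preimage_emb Φ.measurableEmbedding (fun z => g z.1 * h z.2) (A ×ˢ B)
  rw [← setIntegral_prod_mul, ← Measure.volume_eq_prod, ← this]
  rfl

section RangeMono

variable {α β γ : Type*} [Preorder α] [LinearOrder β] [Preorder γ] {φ : β → γ} {u : γ → α}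

lemma strictMonoOn_range_iff (hφ : StrictMono φ) :
    StrictMonoOn u (range φ) ↔ StrictMono (u ∘ φ) := by
  simp only [StrictMonoOn, forall_mem_range, hφ.lt_iff_lt, StrictMono, comp_apply]

lemma strictAntiOn_range_iff (hφ : StrictMono φ) :
    StrictAntiOn u (range φ) ↔ StrictAnti (u ∘ φ) := by
  simp only [StrictAntiOn, forall_mem_range, hφ.lt_iff_lt, StrictAnti, comp_apply]

end RangeMono

lemma setIntegral_upDownSet_inter_cube (a b : ℝ) {k : ℕ} (f : Fin k → ℝ → ℝ) {j : ℕ}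
    (hj : j ≤ k) :
    ∫ u in upDownSet k j ∩ cube a b k, ∏ i, f i (u i) =
      (∫ s in {s | StrictMono s} ∩ cube a b j, ∏ i : Fin j, f ⟨i, by omega⟩ (s i)) *
        ∫ t in {t | StrictAnti t} ∩ cube a b (k - j),
          ∏ i : Fin (k - j), f ⟨j + i, by omega⟩ (t i) := by
  let e : Fin j ⊕ Fin (k - j) ≃ Fin k := finSumFinEquiv.trans (finCongr (Nat.add_sub_of_le hj))
  have hinl : StrictMono fun i => e (.inl i) := fun _ _ h => h
  have hinr : StrictMono fun i => e (.inr i) := fun _ _ h => Nat.add_lt_add_left h j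
  have hrange_inl : range (fun i => e (.inl i)) = {p : Fin k | (p : ℕ) < j} :=
    Fin.range_castLE hj
  have hrange_inr : range (fun i => e (.inr i)) = {p : Fin k | j ≤ (p : ℕ)} := by
    ext p
    refine ⟨?_, fun (hp : j ≤ (p : ℕ)) => ⟨⟨p - j, by omega⟩, Fin.ext (Nat.add_sub_of_le hp)⟩⟩
    rintro ⟨i, rfl⟩
    exact Nat.le_add_right j i
  have hset : upDownSet k j ∩ cube a b k =
      {u | (fun i => u (e (.inl i))) ∈ {s | StrictMono s} ∩ cube a b j ∧
        (fun i => u (e (.inr i))) ∈ {t | StrictAnti t} ∩ cube a b (k - j)} := by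
    ext u
    simp only [upDownSet, cube, mem_inter_iff, mem_ofPred_eq, ← hrange_inl, ← hrange_inr,
      strictMonoOn_range_iff hinl, strictAntiOn_range_iff hinr,
      ← e.forall_congr_right (q := fun p => u p ∈ Ioo a b), Sum.forall]
    tauto
  rw [hset, ← setIntegral_mul_comp_sumPiEquiv e]
  congr 1 with u
  rw [← e.prod_comp, Fintype.prod_sum_type]
  rfl

end Signature

open Signature in
/-- Time-reversal identity in coefficient form: with `←X_t = X_{a+b-t}`, for any
nonempty word `(i₁,…,i_k)` one has
`Σ_{j=0}^k S(X)^{i₁,…,i_j}_{a,b} · S(←X)^{i_{j+1},…,i_k}_{a,b} = 0`,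
expressing that the signature of the time-reversed path is the inverse of the
signature of `X` under the tensor product. -/
theorem sigTerm_time_reversal {d : ℕ} (a b : ℝ)
    (X : ℝ → Fin d → ℝ) (hX : ContDiff ℝ 1 X)
    (k : ℕ) (hk : 1 ≤ k) (w : Fin k → Fin d) :
    (∑ j : Fin (k + 1),
        sigTerm X a b
            (fun i : Fin (j : ℕ) => w ⟨i.1, by have h1 := i.isLt; have h2 := j.isLt; omega⟩) *
          sigTerm (fun t => X (a + b - t)) a b
            (fun i : Fin (k - (j : ℕ)) => w ⟨(j : ℕ) + i.1, by have h1 := i.isLt; omega⟩)) = 0 := by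
  let f : Fin k → ℝ → ℝ := fun p => deriv (fun s => X s (w p))
  have hint : IntegrableOn (fun u => ∏ i, f i (u i)) (cube a b k) :=
    integrableOn_cube_prod a b fun p => (contDiff_pi.1 hX (w p)).continuous_deriv le_rfl
  calc _ = ∑ j : Fin (k + 1), (-1 : ℝ) ^ (k - j) *
        ∫ u in upDownSet k j, ∏ i, f i (u i) ∂(volume.restrict (cube a b k)) := by
        refine Finset.sum_congr rfl fun j _ => ?_
        rw [sigTerm_comp_reflect, mul_left_comm,
          Measure.restrict_restrict (measurableSet_upDownSet k j),
          setIntegral_upDownSet_inter_cube a b f j.is_le]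
        rfl
    _ = 0 := sum_neg_one_pow_mul_setIntegral_upDownSet hk (ae_restrict_of_ae (ae_injective _)) hint
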